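/- Under the hypotheses of Lemma 4.3 (X path-connected semi-locally small loop, p : X̃ → X a covering with p₋(π₁(X̃,x̃)) = π₁ˢ(X,x) for one x̃ over x), the equality p₋(π₁(X̃, ỹ)) = π₁ˢ(X, p(ỹ)) holds for every point ỹ ∈ X̃. -/

import Mathlib

open CategoryTheory Topology

attribute [local instance] Path.Homotopic.setoid

noncomputable section

variable {X Y E : Type*} [TopologicalSpace X] [TopologicalSpace Y] [TopologicalSpace E]

/-- Build an element of the fundamental group from a homotopy class of loops. -/
def fromLoop {x : X} (p : Path.Homotopic.Quotient x x) : FundamentalGroup X x :=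
  FundamentalGroup.fromPath p

/-- The homotopy class of loops underlying an element of the fundamental group. -/
def toLoop {x : X} (γ : FundamentalGroup X x) : Path.Homotopic.Quotient x x :=
  FundamentalGroup.toPath γ

/-- A fundamental group element is *small* if it has a loop representative inside every
neighborhood of the basepoint. -/
def IsSmall {x : X} (γ : FundamentalGroup X x) : Prop :=
  ∀ U ∈ nhds x, ∃ δ : Path x x, (∀ t, δ t ∈ U) ∧ fromLoop ⟦δ⟧ = γ

/-- The set of small loop classes, i.e. the carrier of the small loop group `π₁ˢ(X,x)`. -/
def smallSet (X : Type*) [TopologicalSpace X] (x : X) : Set (FundamentalGroup X x) :=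
  {γ | IsSmall γ}

/-- Conjugate of a loop class at `y` by a path `α` from `x` to `y`: `α * β * α⁻¹`. -/
def conjPath {x y : X} (α : Path x y) (β : FundamentalGroup X y) : FundamentalGroup X x :=
  fromLoop (Path.Homotopic.Quotient.trans
    (Path.Homotopic.Quotient.trans (⟦α⟧ : Path.Homotopic.Quotient x y) (toLoop β))
    (⟦α.symm⟧ : Path.Homotopic.Quotient y x))

/-- The SG subgroup `π₁ˢᵍ(X,x)`: generated by conjugates of small loop classes. -/
def sgSubgroup (X : Type*) [TopologicalSpace X] (x : X) : Subgroup (FundamentalGroup X x) :=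
  Subgroup.closure {g | ∃ (y : X) (α : Path x y) (β : FundamentalGroup X y), IsSmall β ∧ g = conjPath α β}

/-- The map induced on fundamental groups by a continuous map. -/
def piMap (f : C(X, Y)) (x : X) (γ : FundamentalGroup X x) : FundamentalGroup Y (f x) :=
  fromLoop (Path.Homotopic.Quotient.map (toLoop γ) f)

/-- A small loop space: a path-connected, non-simply connected space all of whose loops
are small. -/
def IsSmallLoopSpace (X : Type*) [TopologicalSpace X] : Prop :=
  PathConnectedSpace X ∧ ¬ SimplyConnectedSpace X ∧
    ∀ (x : X) (γ : FundamentalGroup X x), IsSmall γ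

/-- A space is homotopically Hausdorff if every nontrivial loop class can be kept away from
some neighborhood of its basepoint. -/
def HomotopicallyHausdorff (X : Type*) [TopologicalSpace X] : Prop :=
  ∀ (x : X) (γ : FundamentalGroup X x), γ ≠ 1 →
    ∃ U ∈ nhds x, ∀ δ : Path x x, (∀ t, δ t ∈ U) → fromLoop ⟦δ⟧ ≠ γ

/-- The image of `π₁(U,y) → π₁(X,y)`: classes of loops having a representative inside `U`. -/
def loopsIn (U : Set X) (y : X) : Set (FundamentalGroup X y) :=
  {γ | ∃ δ : Path y y, (∀ t, δ t ∈ U) ∧ fromLoop ⟦δ⟧ = γ}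

/-- A semi-locally small loop space. -/
def SemiLocallySmallLoop (X : Type*) [TopologicalSpace X] : Prop :=
  ∀ x : X, ∃ U : Set X, IsOpen U ∧ x ∈ U ∧ ∀ y ∈ U, loopsIn U y = smallSet X y

/-!
Conjugation by a path `α` from `x` to `y` carries small loop classes at `y` to small loop classes
at `x`. For a path inside a neighbourhood `U` as in the definition of semi-local smallness, a small
class at `y` is represented by a loop `δ` in `U`, so `α δ α⁻¹` is a loop in `U` and hence small. A
general path is cut into such pieces by connectedness of `[0, 1]`. Since `p₋` intertwines
conjugation by a path `γ` in `E` with conjugation by `p ∘ γ`, the equality at `xt` transports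
along a path from `xt` to `yt`.
-/

open Set unitInterval

theorem eventually_uIcc_subset_of_mem_nhds {α : Type*} [LinearOrder α] [TopologicalSpace α]
    [OrderTopology α] {a : α} {s : Set α} (hs : s ∈ 𝓝 a) : ∀ᶠ b in 𝓝 a, uIcc a b ⊆ s := by
  obtain ⟨l, u, hlu, hnhds, hsub⟩ := exists_Icc_mem_subset_of_mem_nhds hs
  filter_upwards [hnhds] with b hb
  exact (uIcc_subset_Icc hlu hb).trans hsub

section Conjugation

variable {x y z : X}

theorem conjPath_eq_of_homotopic {α β : Path x y} (h : α.Homotopic β) :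
    conjPath α = conjPath β := by
  have hα : (⟦α⟧ : Path.Homotopic.Quotient x y) = ⟦β⟧ := Quotient.sound h
  have hαsymm : (⟦α.symm⟧ : Path.Homotopic.Quotient y x) = ⟦β.symm⟧ := Quotient.sound h.symm₂
  unfold conjPath
  rw [hα, hαsymm]

theorem conjPath_trans (α : Path x y) (β : Path y z) (g : FundamentalGroup X z) :
    conjPath (α.trans β) g = conjPath α (conjPath β g) := by
  simp [conjPath, fromLoop, toLoop, Path.trans_symm]

theorem conjPath_symm_conjPath (α : Path x y) (g : FundamentalGroup X y) :
    conjPath α.symm (conjPath α g) = g := by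
  rw [← conjPath_trans, conjPath_eq_of_homotopic (Path.Homotopic.symm_trans α)]
  simp [conjPath, fromLoop, toLoop]

theorem piMap_conjPath (f : C(X, Y)) (α : Path x y) (g : FundamentalGroup X y) :
    piMap f x (conjPath α g) = conjPath (α.map f.continuous) (piMap f y g) := by
  induction g using Path.Homotopic.Quotient.ind with | mk γ =>
  change (⟦((α.trans γ).trans α.symm).map f.continuous⟧ : Path.Homotopic.Quotient (f x) (f x)) =
    ⟦((α.map f.continuous).trans (γ.map f.continuous)).trans (α.map f.continuous).symm⟧
  rw [Path.map_trans, Path.map_trans, Path.map_symm]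

theorem mapsTo_conjPath_smallSet_cast_iff {a b a' b' : X} (α : Path a b) (ha : a' = a)
    (hb : b' = b) :
    MapsTo (conjPath (α.cast ha hb)) (smallSet X b') (smallSet X a') ↔
      MapsTo (conjPath α) (smallSet X b) (smallSet X a) := by
  subst ha hb
  rfl

end Conjugation

theorem mapsTo_conjPath_smallSet_of_range_subset {U : Set X} (hU : IsOpen U)
    (hUsmall : ∀ y ∈ U, loopsIn U y = smallSet X y) {x y : X} (α : Path x y)
    (hα : range α ⊆ U) : MapsTo (conjPath α) (smallSet X y) (smallSet X x) := by
  intro g hg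
  obtain ⟨δ, hδU, rfl⟩ := hg U (hU.mem_nhds (hα ⟨1, α.target⟩))
  rw [← hUsmall x (hα ⟨0, α.source⟩)]
  have hconj : range ((α.trans δ).trans α.symm) ⊆ U := by
    simp only [Path.trans_range, Path.symm_range, union_subset_iff]
    exact ⟨⟨hα, range_subset_iff.2 hδU⟩, hα⟩
  exact ⟨(α.trans δ).trans α.symm, fun t => hconj (mem_range_self t), rfl⟩

theorem SemiLocallySmallLoop.mapsTo_conjPath_smallSet (hX : SemiLocallySmallLoop X) {x y : X}
    (α : Path x y) : MapsTo (conjPath α) (smallSet X y) (smallSet X x) := by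
  have hsubpath : ∀ s t : I,
      MapsTo (conjPath (α.subpath s t)) (smallSet X (α t)) (smallSet X (α s)) := by
    refine PreconnectedSpace.induction₂' _ (fun s => ?_) ⟨fun r s t hrs hst => ?_⟩
    · obtain ⟨U, hU, hsU, hUsmall⟩ := hX (α s)
      filter_upwards [eventually_uIcc_subset_of_mem_nhds
        (α.continuous.continuousAt.preimage_mem_nhds (hU.mem_nhds hsU))] with t ht
      refine ⟨mapsTo_conjPath_smallSet_of_range_subset hU hUsmall _ ?_,
        mapsTo_conjPath_smallSet_of_range_subset hU hUsmall _ ?_⟩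
      · rw [Path.range_subpath]
        exact image_subset_iff.2 ht
      · rw [Path.range_subpath, uIcc_comm]
        exact image_subset_iff.2 ht
    · rw [← conjPath_eq_of_homotopic ⟨Path.Homotopy.subpathTransSubpath α r s t⟩,
        funext (conjPath_trans _ _)]
      exact hrs.comp hst
  have h01 := hsubpath 0 1
  rw [Path.subpath_zero_one] at h01
  exact (mapsTo_conjPath_smallSet_cast_iff α _ _).1 h01

theorem SemiLocallySmallLoop.range_piMap_eq_smallSet_of_path (hX : SemiLocallySmallLoop X)
    (f : C(E, X)) {a b : E} (γ : Path a b) (ha : range (piMap f a) = smallSet X (f a)) :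
    range (piMap f b) = smallSet X (f b) := by
  ext g
  constructor
  · rintro ⟨h, rfl⟩
    have hconj : piMap f a (conjPath γ h) ∈ smallSet X (f a) := ha ▸ mem_range_self _
    rw [piMap_conjPath] at hconj
    simpa only [conjPath_symm_conjPath] using
      hX.mapsTo_conjPath_smallSet (γ.map f.continuous).symm hconj
  · intro hg
    obtain ⟨h, hh⟩ : conjPath (γ.map f.continuous) g ∈ range (piMap f a) :=
      ha ▸ hX.mapsTo_conjPath_smallSet _ hg
    refine ⟨conjPath γ.symm h, ?_⟩
    rw [piMap_conjPath, hh, ← Path.map_symm, conjPath_symm_conjPath]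

theorem range_eq_smallSet_everywhere_general {E X : Type*} [TopologicalSpace E]
    [TopologicalSpace X] [PathConnectedSpace E]
    (hX : SemiLocallySmallLoop X) (p : C(E, X)) (xt : E)
    (himg : Set.range (piMap p xt) = smallSet X (p xt)) :
    ∀ yt : E, Set.range (piMap p yt) = smallSet X (p yt) := fun yt =>
  hX.range_piMap_eq_smallSet_of_path p (PathConnectedSpace.somePath xt yt) himg

/-- under the hypotheses of Lemma 4.3, the equality
`p₋(π₁(X̃, yt)) = π₁ˢ(X, p yt)` holds at every point `yt` of the covering space. -/
theorem range_eq_smallSet_everywhere {E X : Type*} [TopologicalSpace E]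
    [TopologicalSpace X] [PathConnectedSpace X] [PathConnectedSpace E]
    (hX : SemiLocallySmallLoop X) (p : C(E, X)) (hp : IsCoveringMap p) (xt : E)
    (himg : Set.range (piMap p xt) = smallSet X (p xt)) :
    ∀ yt : E, Set.range (piMap p yt) = smallSet X (p yt) :=
  range_eq_smallSet_everywhere_general hX p xt himg

end
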